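/- arXiv:2602.14776 — 5 statements merged into one kernel-verified Lean document; each statement's English description precedes it below -/
import Mathlib

section
/- Let σ_t^2 = 1/(t·(log(e/t))^3) for t ∈ (0,1). Then ∫_0^1 σ_t^2 · log(σ_t^2) dt < ∞, but for every ε ∈ (0,1), ∫_0^1 σ_t^{2(1+ε)} dt = ∞. -/
/-!
Write `L t = log (e / t) = 1 - log t`, which increases to `∞` as `t → 0⁺`, so that
`σ_t² = 1 / (t L³)` and `log σ_t² = (L - 1) - 3 log L`. Hence `|σ_t² log σ_t²| ≤ 2 / (t L²)`,
the derivative of `2 / L`, which is integrable near `0`. On the other hand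
`σ_t^{2(1+ε)} = t⁻¹ · t^{-ε} L^{-3(1+ε)}`, and `t^{-ε} = e^{ε (L - 1)}` beats any power of `L`,
so near `0` the integrand dominates the non-integrable `t⁻¹`.
-/

open Real MeasureTheory Set Filter Topology

noncomputable def sigmaSq (t : ℝ) : ℝ := (t * (1 - log t) ^ 3)⁻¹

lemma log_exp_one_div {t : ℝ} (ht : 0 < t) : log (exp 1 / t) = 1 - log t := by
  rw [log_div (exp_ne_zero 1) ht.ne', log_exp]

lemma one_lt_one_sub_log {t : ℝ} (ht : t ∈ Ioo 0 1) : 1 < 1 - log t := by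
  linarith [log_neg ht.1 ht.2]

lemma tendsto_one_sub_log_nhdsGT_zero : Tendsto (fun t => 1 - log t) (𝓝[>] 0) atTop := by
  simpa only [sub_eq_add_neg, Function.comp_def] using
    tendsto_atTop_add_const_left _ 1 (tendsto_neg_atBot_atTop.comp tendsto_log_nhdsGT_zero)

lemma integrableOn_inv_mul_one_sub_log_sq :
    IntegrableOn (fun t => (t * (1 - log t) ^ 2)⁻¹) (Ioc 0 1) := by
  -- `(1 - log t)⁻¹` extended by its limit `0` at `t = 0` (plain `(1 - log 0)⁻¹` is `1`)
  set g : ℝ → ℝ := fun t => if t ≤ 0 then 0 else (1 - log t)⁻¹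
  have hg : ∀ t > 0, g =ᶠ[𝓝 t] fun s => (1 - log s)⁻¹ := fun t ht => by
    filter_upwards [eventually_gt_nhds ht] with s hs
    simp [g, not_le.mpr hs]
  refine intervalIntegral.integrableOn_deriv_of_nonneg (g := g) (fun t ht => ?_)
    (fun t ht => ?_) (fun t ht => ?_)
  · rcases ht.1.eq_or_lt with rfl | ht₀
    · refine ContinuousWithinAt.mono ?_ Icc_subset_Ici_self
      rw [← continuousWithinAt_Ioi_iff_Ici, ContinuousWithinAt, show g 0 = 0 by simp [g]]
      exact tendsto_one_sub_log_nhdsGT_zero.inv_tendsto_atTop.congr'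
        (eventually_nhdsWithin_of_forall fun s hs => (hg s hs).self_of_nhds.symm)
    · have hL : 1 - log t ≠ 0 := by linarith [log_nonpos ht₀.le ht.2]
      exact (((continuousAt_const.sub (continuousAt_log ht₀.ne')).inv₀ hL).congr
        (hg t ht₀).symm).continuousWithinAt
  · have hL := one_lt_one_sub_log ht
    refine ((((hasDerivAt_log ht.1.ne').const_sub 1).inv (by positivity)).congr_of_eventuallyEq
      (hg t ht.1)).congr_deriv ?_
    rw [neg_neg, div_eq_mul_inv, mul_inv]
  · have hL := one_lt_one_sub_log ht
    have ht₀ := ht.1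
    positivity

lemma sigmaSq_pos {t : ℝ} (ht : t ∈ Ioo 0 1) : 0 < sigmaSq t := by
  have hL := one_lt_one_sub_log ht
  have ht₀ := ht.1
  unfold sigmaSq
  positivity

lemma log_sigmaSq {t : ℝ} (ht : t ∈ Ioo 0 1) :
    log (sigmaSq t) = (1 - log t) - 1 - 3 * log (1 - log t) := by
  have hL := one_lt_one_sub_log ht
  rw [sigmaSq, log_inv, log_mul ht.1.ne' (by positivity), log_pow]
  push_cast
  ring

lemma norm_sigmaSq_mul_log_le {t : ℝ} (ht : t ∈ Ioo 0 1) :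
    ‖sigmaSq t * log (sigmaSq t)‖ ≤ 2 * (t * (1 - log t) ^ 2)⁻¹ := by
  have hL := one_lt_one_sub_log ht
  have hσ := sigmaSq_pos ht
  have hlog_abs : |log (sigmaSq t)| ≤ 2 * (1 - log t) := by
    have := log_nonneg hL.le
    have := log_le_sub_one_of_pos (zero_lt_one.trans hL)
    rw [log_sigmaSq ht, abs_le]
    constructor <;> linarith
  calc ‖sigmaSq t * log (sigmaSq t)‖ = sigmaSq t * |log (sigmaSq t)| := by
        rw [norm_mul, norm_of_nonneg hσ.le, norm_eq_abs]
    _ ≤ sigmaSq t * (2 * (1 - log t)) := by gcongr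
    _ = 2 * (t * (1 - log t) ^ 2)⁻¹ := by
        have := ht.1
        rw [sigmaSq]
        field_simp

lemma integrableOn_sigmaSq_mul_log :
    IntegrableOn (fun t => sigmaSq t * log (sigmaSq t)) (Ioo 0 1) := by
  refine ((integrableOn_inv_mul_one_sub_log_sq.mono_set Ioo_subset_Ioc_self).const_mul 2).mono'
    (Measurable.aestronglyMeasurable (by unfold sigmaSq; fun_prop)) ?_
  exact (ae_restrict_iff' measurableSet_Ioo).mpr (ae_of_all _ fun t => norm_sigmaSq_mul_log_le)

lemma eventually_inv_le_sigmaSq_rpow {ε : ℝ} (hε : 0 < ε) :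
    ∀ᶠ t in 𝓝[>] 0, t⁻¹ ≤ sigmaSq t ^ (1 + ε) := by
  have hlog_small : ∀ᶠ L in atTop, 2 ≤ L ∧ 3 * (1 + ε) * log L ≤ ε / 2 * L := by
    filter_upwards [eventually_ge_atTop 2,
      isLittleO_log_id_atTop.bound (c := ε / (6 * (1 + ε))) (by positivity)] with L hL hbound
    refine ⟨hL, ?_⟩
    rw [norm_of_nonneg (log_nonneg (by linarith)), id, norm_of_nonneg (by linarith)] at hbound
    calc 3 * (1 + ε) * log L ≤ 3 * (1 + ε) * (ε / (6 * (1 + ε)) * L) := by gcongr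
      _ = ε / 2 * L := by field_simp; ring
  filter_upwards [tendsto_one_sub_log_nhdsGT_zero.eventually hlog_small,
    Ioo_mem_nhdsGT zero_lt_one] with t ⟨hL, hbound⟩ ht
  rw [← log_le_log_iff (inv_pos.mpr ht.1) (rpow_pos_of_pos (sigmaSq_pos ht) _),
    log_rpow (sigmaSq_pos ht), log_inv, log_sigmaSq ht]
  nlinarith

lemma not_integrableOn_Ioo_zero_inv {δ : ℝ} (hδ : 0 < δ) :
    ¬ IntegrableOn (fun t : ℝ => t⁻¹) (Ioo 0 δ) := by
  rw [← integrableOn_Ioc_iff_integrableOn_Ioo,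
    ← intervalIntegrable_iff_integrableOn_Ioc_of_le hδ.le]
  simp [intervalIntegrable_inv_iff, hδ.ne]

lemma not_integrableOn_sigmaSq_rpow {ε : ℝ} (hε : 0 < ε) :
    ¬ IntegrableOn (fun t => sigmaSq t ^ (1 + ε)) (Ioo 0 1) := by
  intro hint
  have hnear : ∀ᶠ t in 𝓝[>] 0, t ∈ Ioo 0 1 ∧ t⁻¹ ≤ sigmaSq t ^ (1 + ε) :=
    Filter.Eventually.and (Ioo_mem_nhdsGT zero_lt_one) (eventually_inv_le_sigmaSq_rpow hε)
  obtain ⟨δ, hδ : (0 : ℝ) < δ, hsub⟩ := mem_nhdsGT_iff_exists_Ioo_subset.mp hnear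
  refine not_integrableOn_Ioo_zero_inv hδ
    ((hint.mono_set fun t ht => (hsub ht).1).mono' (by fun_prop) ?_)
  refine (ae_restrict_iff' measurableSet_Ioo).mpr (ae_of_all _ fun t ht => ?_)
  rw [norm_of_nonneg (inv_pos.mpr ht.1).le]
  exact (hsub ht).2

theorem stmt_3 (σ2 : ℝ → ℝ)
    (hσ2 : ∀ t ∈ Set.Ioo (0:ℝ) 1, σ2 t = 1 / (t * (Real.log (Real.exp 1 / t)) ^ 3)) :
    MeasureTheory.IntegrableOn (fun t => σ2 t * Real.log (σ2 t)) (Set.Ioo (0:ℝ) 1) ∧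
    ∀ ε : ℝ, 0 < ε → ε < 1 →
      ¬ MeasureTheory.IntegrableOn (fun t => (σ2 t) ^ (1 + ε)) (Set.Ioo (0:ℝ) 1) := by
  have hσ : EqOn sigmaSq σ2 (Ioo 0 1) := fun t ht => by
    rw [hσ2 t ht, log_exp_one_div ht.1, one_div, sigmaSq]
  constructor
  · exact integrableOn_sigmaSq_mul_log.congr_fun (fun t ht => by simp only [hσ ht])
      measurableSet_Ioo
  · intro ε hε _ hint
    exact not_integrableOn_sigmaSq_rpow hε
      (hint.congr_fun (fun t ht => by simp only [hσ ht]) measurableSet_Ioo)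
end

section
/- Let X be a continuous martingale under Q with absolutely continuous quadratic variation of density Σ_t, satisfying ⟨X⟩_1 = 1 Q-almost surely, where X solves dX_t = σ(X_t) dB_t. Then the specific relative entropy h(W‖Q) = (1/2)·E_Q[∫_0^1 (1/Σ_t − log(1/Σ_t) − 1) dt evaluated along the time-change] equals the reciprocal specific relative entropy 𝔥(Q‖W) = (1/2)·E_Q[∫_0^1 (Σ_t log Σ_t + 1 − Σ_t) dt]. -/
/-!
Write `f = σ(X)²` along a path, so that `A = ∫₀^· f` is strictly increasing with `A 1 = 1`
and `τ` inverts it on `[0, 1]`. Substituting `t = A s` (valid for the primitive of a positive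
integrable function, by the Lebesgue differentiation theorem and the one-dimensional change of
variables on the full-measure set where `A' = f`) turns the time-changed integral into
`∫₀¹ f s · (1/f s - log (1/f s) - 1) ds`, and `f (1/f - log (1/f) - 1) = f log f + 1 - f`.
-/

open MeasureTheory Set

namespace intervalIntegral

variable {f : ℝ → ℝ} {a b : ℝ}

theorem strictMonoOn_integral_of_pos (hf : IntervalIntegrable f volume a b)
    (hpos : ∀ x ∈ Ioo a b, 0 < f x) :
    StrictMonoOn (fun x => ∫ u in a..x, f u) (Icc a b) := by
  intro x hx y hy hxy
  have hsub : ∀ z ∈ Icc a b, IntervalIntegrable f volume a z := fun z hz =>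
    hf.mono_set (uIcc_subset_uIcc_left (mem_uIcc_of_le hz.1 hz.2))
  have hxy_pos : 0 < ∫ u in x..y, f u :=
    intervalIntegral_pos_of_pos_on ((hsub x hx).symm.trans (hsub y hy))
      (fun z hz => hpos z ⟨hx.1.trans_lt hz.1, hz.2.trans_le hy.2⟩) hxy
  have := integral_interval_sub_left (hsub y hy) (hsub x hx)
  dsimp only
  linarith

theorem exists_measurableSet_ae_eq_Ioo_hasDerivAt_integral
    (hf : IntervalIntegrable f volume a b) :
    ∃ s ⊆ Ioo a b, MeasurableSet s ∧ s =ᵐ[volume] Ioo a b ∧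
      ∀ x ∈ s, HasDerivAt (fun x => ∫ u in a..x, f u) (f x) x := by
  set S := {x ∈ Ioo a b | HasDerivAt (fun x => ∫ u in a..x, f u) (f x) x}
  have hS : S =ᵐ[volume] Ioo a b := by
    filter_upwards [hf.ae_hasDerivAt_integral] with x hx
    exact propext ⟨And.left, fun hxab =>
      ⟨hxab, hx (Icc_subset_uIcc (Ioo_subset_Icc_self hxab)) a left_mem_uIcc⟩⟩
  obtain ⟨s, hsS, hs, hs_ae⟩ :=
    (measurableSet_Ioo.nullMeasurableSet.congr hS.symm).exists_measurable_subset_ae_eq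
  exact ⟨s, hsS.trans (sep_subset _ _), hs, hs_ae.trans hS, fun x hx => (hsS hx).2⟩

variable {E : Type*} [NormedAddCommGroup E] [NormedSpace ℝ E]

theorem integral_smul_comp_integral_of_pos (hab : a ≤ b) (hf : IntervalIntegrable f volume a b)
    (hpos : ∀ x ∈ Ioo a b, 0 < f x) (G : ℝ → E) :
    ∫ x in a..b, f x • G (∫ u in a..x, f u) = ∫ y in 0..∫ u in a..b, f u, G y := by
  set F : ℝ → ℝ := fun x => ∫ u in a..x, f u
  have hmono : StrictMonoOn F (Icc a b) := strictMonoOn_integral_of_pos hf hpos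
  have hFa : F a = 0 := integral_same
  obtain ⟨s, hs_sub, hs, hs_ae, hderiv⟩ := exists_measurableSet_ae_eq_Ioo_hasDerivAt_integral hf
  have hderivW : ∀ x ∈ s, HasDerivWithinAt F (f x) s x :=
    fun x hx => (hderiv x hx).hasDerivWithinAt
  have hinj : InjOn F s := hmono.injOn.mono (hs_sub.trans Ioo_subset_Icc_self)
  have hmaps : F '' s ⊆ Ioo 0 (F b) := by
    rintro _ ⟨x, hx, rfl⟩
    have hx' := hs_sub hx
    refine ⟨hFa ▸ hmono (left_mem_Icc.2 hab) ?_ hx'.1, hmono ?_ (right_mem_Icc.2 hab) hx'.2⟩ <;>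
      exact Ioo_subset_Icc_self hx'
  have hvol : volume (Ioo 0 (F b)) = volume (F '' s) := by
    calc volume (Ioo 0 (F b)) = ENNReal.ofReal (∫ x in Ioo a b, f x) := by
          rw [Real.volume_Ioo, sub_zero, ← integral_Ioc_eq_integral_Ioo, ← integral_of_le hab]
      _ = ∫⁻ x in s, ENNReal.ofReal |f x| * 1 := by
          rw [ofReal_integral_eq_lintegral_ofReal
            ((intervalIntegrable_iff_integrableOn_Ioo_of_le hab).1 hf)
            ((ae_restrict_iff' measurableSet_Ioo).2 (.of_forall fun x hx => (hpos x hx).le)),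
            setLIntegral_congr hs_ae.symm]
          refine setLIntegral_congr_fun hs fun x hx => ?_
          rw [mul_one, abs_of_pos (hpos x (hs_sub hx))]
      _ = volume (F '' s) :=
          (lintegral_image_eq_lintegral_abs_deriv_mul hs hderivW hinj fun _ => 1).symm.trans
            (setLIntegral_one _)
  have himage : F '' s =ᵐ[volume] Ioo 0 (F b) :=
    ae_eq_of_subset_of_measure_ge hmaps hvol.le
      (measurable_image_of_fderivWithin hs (fun x hx => (hderivW x hx).hasFDerivWithinAt)
        hinj).nullMeasurableSet measure_Ioo_lt_top.ne
  have hFb : 0 ≤ F b := hFa ▸ hmono.monotoneOn (left_mem_Icc.2 hab) (right_mem_Icc.2 hab) hab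
  calc ∫ x in a..b, f x • G (F x) = ∫ x in s, |f x| • G (F x) := by
        rw [integral_of_le hab, integral_Ioc_eq_integral_Ioo, ← setIntegral_congr_set hs_ae]
        refine setIntegral_congr_fun hs fun x hx => ?_
        rw [abs_of_pos (hpos x (hs_sub hx))]
    _ = ∫ y in F '' s, G y := (integral_image_eq_integral_abs_deriv_smul hs hderivW hinj G).symm
    _ = ∫ y in 0..F b, G y := by
        rw [setIntegral_congr_set himage, integral_of_le hFb, integral_Ioc_eq_integral_Ioo]

end intervalIntegral

theorem Real.mul_one_div_sub_log_one_div_sub_one {x : ℝ} (hx : x ≠ 0) :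
    x * (1 / x - Real.log (1 / x) - 1) = x * Real.log x + 1 - x := by
  rw [one_div, Real.log_inv, mul_sub, mul_sub, mul_inv_cancel₀ hx]
  ring

theorem stmt_5_general {Ω : Type*} [MeasurableSpace Ω] (Q : Measure Ω)
    (σ : ℝ → ℝ) (X A τ : ℝ → Ω → ℝ)
    (hA : ∀ ω t, A t ω = ∫ s in (0:ℝ)..t, (σ (X s ω)) ^ 2)
    (hσpos : ∀ s, ∀ ω, 0 < σ (X s ω))
    (hAτ : ∀ ω, ∀ s ∈ Set.Icc (0:ℝ) 1, τ (A s ω) ω = s)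
    (hA1 : ∀ᵐ ω ∂Q, A 1 ω = 1) :
    (1/2) * ∫ ω, (∫ t in (0:ℝ)..1,
        (1 / (σ (X (τ t ω) ω)) ^ 2 - Real.log (1 / (σ (X (τ t ω) ω)) ^ 2) - 1)) ∂Q
      = (1/2) * ∫ ω, (∫ t in (0:ℝ)..1,
        ((σ (X t ω)) ^ 2 * Real.log ((σ (X t ω)) ^ 2) + 1 - (σ (X t ω)) ^ 2)) ∂Q := by
  congr 1
  refine integral_congr_ae ?_
  filter_upwards [hA1] with ω hA1ω
  -- otherwise `A 1 ω` would be the junk value `0` of a non-integrable integrand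
  have hf : IntervalIntegrable (fun s => σ (X s ω) ^ 2) volume 0 1 := by
    by_contra h
    rw [hA, intervalIntegral.integral_undef h] at hA1ω
    exact zero_ne_one hA1ω
  have hchange := intervalIntegral.integral_smul_comp_integral_of_pos zero_le_one hf
    (fun s _ => pow_pos (hσpos s ω) 2)
    fun t => 1 / σ (X (τ t ω) ω) ^ 2 - Real.log (1 / σ (X (τ t ω) ω) ^ 2) - 1
  rw [← hA, hA1ω] at hchange
  rw [← hchange]
  refine intervalIntegral.integral_congr fun x hx => ?_
  rw [uIcc_of_le zero_le_one] at hx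
  simp only [← hA, hAτ ω x hx, smul_eq_mul]
  exact Real.mul_one_div_sub_log_one_div_sub_one (pow_pos (hσpos x ω) 2).ne'

/-- Reciprocal relation between the specific relative entropy `h(W‖Q)` (expressed via the
time-change of `X` by its quadratic variation) and the reciprocal specific relative entropy
`𝔥(Q‖W)`, for `Q` the law of `dX = σ(X) dB` with quadratic variation `A` and inverse
time-change `τ`, under the assumption `⟨X⟩₁ = 1` a.s. -/
theorem stmt_5 {Ω : Type*} [MeasurableSpace Ω] (Q : Measure Ω) [IsProbabilityMeasure Q]
    (σ : ℝ → ℝ) (X A τ : ℝ → Ω → ℝ)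
    (hA : ∀ ω t, A t ω = ∫ s in (0:ℝ)..t, (σ (X s ω)) ^ 2)
    (hσpos : ∀ s, ∀ ω, 0 < σ (X s ω))
    (hτA : ∀ ω, ∀ t ∈ Set.Icc (0:ℝ) 1, A (τ t ω) ω = t)
    (hAτ : ∀ ω, ∀ s ∈ Set.Icc (0:ℝ) 1, τ (A s ω) ω = s)
    (hA1 : ∀ᵐ ω ∂Q, A 1 ω = 1) :
    (1/2) * ∫ ω, (∫ t in (0:ℝ)..1,
        (1 / (σ (X (τ t ω) ω)) ^ 2 - Real.log (1 / (σ (X (τ t ω) ω)) ^ 2) - 1)) ∂Q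
      = (1/2) * ∫ ω, (∫ t in (0:ℝ)..1,
        ((σ (X t ω)) ^ 2 * Real.log ((σ (X t ω)) ^ 2) + 1 - (σ (X t ω)) ^ 2)) ∂Q :=
  stmt_5_general Q σ X A τ hA hσpos hAτ hA1
end

section
/- The function f(x) = −( (1/4)x² log(x²) + (1/4)(1−x)² log((1−x)²) + x(1−x) ) on (0,1) satisfies the ODE x(1−x) = exp(−f''(x) − 1), together with the boundary conditions f(0) = f(1) = 0 (interpreted as limits). -/
open Real Set Filter Topology

/-!
With `q t = t² log t²` the function is `-(q x + q (1 - x)) / 4 - x (1 - x)`. Since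
`q'' t = 2 log t² + 6`, its second derivative on `(0, 1)` is `-log (x (1 - x)) - 1`, which is the
ODE. The boundary values come from continuity of `t log t` at `0` (`Real.continuous_mul_log`),
so `f` is continuous on `ℝ` with `f 0 = f 1 = 0`.
-/

lemma hasDerivAt_sq_mul_log_sq {t : ℝ} (ht : t ≠ 0) :
    HasDerivAt (fun t => t ^ 2 * log (t ^ 2)) (2 * t * log (t ^ 2) + 2 * t) t := by
  refine ((hasDerivAt_pow 2 t).mul ((hasDerivAt_pow 2 t).log (pow_ne_zero 2 ht))).congr_deriv ?_
  field_simp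
  ring

lemma hasDerivAt_mul_log_sq {t : ℝ} (ht : t ≠ 0) :
    HasDerivAt (fun t => t * log (t ^ 2)) (log (t ^ 2) + 2) t := by
  refine ((hasDerivAt_id' t).mul ((hasDerivAt_pow 2 t).log (pow_ne_zero 2 ht))).congr_deriv ?_
  field_simp
  ring

noncomputable def winValue (x : ℝ) : ℝ :=
  -(x ^ 2 * log (x ^ 2) + (1 - x) ^ 2 * log ((1 - x) ^ 2)) / 4 - x * (1 - x)

noncomputable def winValueDeriv (x : ℝ) : ℝ :=
  -(x * log (x ^ 2) - (1 - x) * log ((1 - x) ^ 2)) / 2 + x - 1 / 2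

lemma hasDerivAt_winValue {x : ℝ} (hx₀ : x ≠ 0) (hx₁ : x ≠ 1) :
    HasDerivAt winValue (winValueDeriv x) x := by
  have hrefl := (hasDerivAt_id' x).const_sub 1
  have hsq := hasDerivAt_sq_mul_log_sq hx₀
  have hsq' := (hasDerivAt_sq_mul_log_sq (sub_ne_zero.2 hx₁.symm)).comp x hrefl
  refine (((hsq.add hsq').neg.div_const 4).sub ((hasDerivAt_id' x).mul hrefl)).congr_deriv ?_
  rw [winValueDeriv]
  ring

lemma hasDerivAt_winValueDeriv {x : ℝ} (hx₀ : x ≠ 0) (hx₁ : x ≠ 1) :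
    HasDerivAt winValueDeriv (-(log (x ^ 2) + log ((1 - x) ^ 2)) / 2 - 1) x := by
  have hrefl := (hasDerivAt_id' x).const_sub 1
  have hml := hasDerivAt_mul_log_sq hx₀
  have hml' := (hasDerivAt_mul_log_sq (sub_ne_zero.2 hx₁.symm)).comp x hrefl
  refine ((((hml.sub hml').neg.div_const 2).add (hasDerivAt_id' x)).sub_const (1 / 2)).congr_deriv
    ?_
  ring

lemma deriv_deriv_winValue {x : ℝ} (hx : x ∈ Ioo 0 1) :
    deriv (deriv winValue) x = -log (x * (1 - x)) - 1 := by
  have hderiv : deriv winValue =ᶠ[𝓝 x] winValueDeriv := by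
    filter_upwards [isOpen_Ioo.mem_nhds hx] with y hy
    exact (hasDerivAt_winValue hy.1.ne' hy.2.ne).deriv
  rw [hderiv.deriv_eq, (hasDerivAt_winValueDeriv hx.1.ne' hx.2.ne).deriv,
    log_mul hx.1.ne' (sub_pos.2 hx.2).ne', log_pow, log_pow]
  push_cast
  ring

lemma continuous_winValue : Continuous winValue := by
  have hsq : Continuous fun x : ℝ => x ^ 2 * log (x ^ 2) :=
    continuous_mul_log.comp (continuous_pow 2)
  unfold winValue
  fun_prop

theorem stmt_6 (f : ℝ → ℝ)
    (hf : ∀ x, f x = -((1/4) * x ^ 2 * Real.log (x ^ 2)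
        + (1/4) * (1 - x) ^ 2 * Real.log ((1 - x) ^ 2) + x * (1 - x))) :
    (∀ x ∈ Set.Ioo (0:ℝ) 1, x * (1 - x) = Real.exp (-(deriv (deriv f) x) - 1)) ∧
    Filter.Tendsto f (nhdsWithin 0 (Set.Ioo (0:ℝ) 1)) (nhds 0) ∧
    Filter.Tendsto f (nhdsWithin 1 (Set.Ioo (0:ℝ) 1)) (nhds 0) := by
  obtain rfl : f = winValue := funext fun x => (hf x).trans (by unfold winValue; ring)
  refine ⟨fun x hx => ?_, ?_, ?_⟩
  · rw [deriv_deriv_winValue hx, neg_sub, sub_neg_eq_add, add_sub_cancel_left,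
      exp_log (mul_pos hx.1 (sub_pos.2 hx.2))]
  · simpa [winValue] using (continuous_winValue.tendsto 0).mono_left nhdsWithin_le_nhds
  · simpa [winValue] using (continuous_winValue.tendsto 1).mono_left nhdsWithin_le_nhds
end

section
/- The function v̄(t,x) = −( (1/4)x² log(x²) + (1/4)(1−x)² log((1−x)²) + x(1−x) ) − (1/2)·log(1−t)·x(1−x), defined for (t,x) ∈ [0,1)×(0,1), is a classical solution of the PDE ∂_t v(t,x) = (1/2)·exp(−∂_x² v(t,x) − 1), with v̄(t,0) = v̄(t,1) = 0 and v̄(t,x) → +∞ as t → 1 for fixed x ∈ (0,1). -/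
open Real Filter Set Topology

/-!
Since `Real.log (x ^ 2) = 2 * Real.log x` for every real `x`, the function is
`-(x² log x + (1-x)² log (1-x))/2 - x(1-x) - log(1-t) x(1-x)/2`. Away from `x = 0, 1` its second
spatial derivative is `log (1-t) - log x - log (1-x) - 1`, so `exp (-∂ₓ² v - 1) = x(1-x)/(1-t)`,
which is twice `∂ₜ v = x(1-x)/(2(1-t))`. The blow-up at `t = 1` is that of `-log (1-t)`, weighted
by `x(1-x) > 0`.
-/

noncomputable def vbar (t x : ℝ) : ℝ :=
  -((1/2) * (x ^ 2 * log x + (1 - x) ^ 2 * log (1 - x)) + x * (1 - x))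
    - (1/2) * log (1 - t) * (x * (1 - x))

lemma hasDerivAt_sq_mul_log {x : ℝ} (hx : x ≠ 0) :
    HasDerivAt (fun y => y ^ 2 * log y) (2 * x * log x + x) x := by
  refine ((hasDerivAt_pow 2 x).fun_mul (hasDerivAt_log hx)).congr_deriv ?_
  field_simp
  ring

lemma hasDerivAt_mul_log_one_sub {x : ℝ} (hx : x ≠ 1) :
    HasDerivAt (fun y => (1 - y) * log (1 - y)) (-(log (1 - x) + 1)) x := by
  have hsub : HasDerivAt (fun y : ℝ => 1 - y) (-1) x := by
    simpa using (hasDerivAt_id x).const_sub 1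
  exact ((hasDerivAt_mul_log (sub_ne_zero.mpr hx.symm)).comp x hsub).congr_deriv (by ring)

lemma hasDerivAt_vbar_time {t : ℝ} (ht : t < 1) (x : ℝ) :
    HasDerivAt (fun s => vbar s x) (x * (1 - x) / (2 * (1 - t))) t := by
  have hlog : HasDerivAt (fun s => log (1 - s)) (-1 / (1 - t)) t :=
    ((hasDerivAt_id t).const_sub 1).log (sub_ne_zero.mpr ht.ne')
  refine ((hlog.const_mul (1/2)).mul_const (x * (1 - x))).const_sub _ |>.congr_deriv ?_
  field_simp

lemma hasDerivAt_vbar_space (t : ℝ) {x : ℝ} (hx0 : x ≠ 0) (hx1 : x ≠ 1) :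
    HasDerivAt (vbar t)
      ((1 - x) * log (1 - x) - x * log x - (1/2) * (1 + log (1 - t)) * (1 - 2 * x)) x := by
  have hx1' : 1 - x ≠ 0 := sub_ne_zero.mpr hx1.symm
  have hsub : HasDerivAt (fun y : ℝ => 1 - y) (-1) x := by
    simpa using (hasDerivAt_id x).const_sub 1
  have hright : HasDerivAt (fun y => (1 - y) ^ 2 * log (1 - y))
      ((2 * (1 - x) * log (1 - x) + (1 - x)) * -1) x :=
    (hasDerivAt_sq_mul_log hx1').comp x hsub
  have hquad : HasDerivAt (fun y : ℝ => y * (1 - y)) (1 * (1 - x) + x * -1) x :=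
    (hasDerivAt_id x).mul hsub
  refine (((((hasDerivAt_sq_mul_log hx0).fun_add hright).const_mul (1/2)).fun_add
    hquad).fun_neg.fun_sub (hquad.const_mul ((1/2) * log (1 - t)))).congr_deriv ?_
  ring

lemma deriv_deriv_vbar (t : ℝ) {x : ℝ} (hx0 : x ≠ 0) (hx1 : x ≠ 1) :
    deriv (deriv (vbar t)) x = log (1 - t) - log x - log (1 - x) - 1 := by
  have hderiv : deriv (vbar t) =ᶠ[𝓝 x] fun y =>
      (1 - y) * log (1 - y) - y * log y - (1/2) * (1 + log (1 - t)) * (1 - 2 * y) := by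
    filter_upwards [eventually_ne_nhds hx0, eventually_ne_nhds hx1] with y hy0 hy1
    exact (hasDerivAt_vbar_space t hy0 hy1).deriv
  rw [hderiv.deriv_eq]
  have hlin : HasDerivAt (fun y : ℝ => 1 - 2 * y) (-2) x := by
    simpa using ((hasDerivAt_id x).const_mul 2).const_sub 1
  rw [(((hasDerivAt_mul_log_one_sub hx1).fun_sub (hasDerivAt_mul_log hx0)).fun_sub
    (hlin.const_mul ((1/2) * (1 + log (1 - t))))).deriv]
  ring

lemma deriv_vbar_time_eq_half_exp {t : ℝ} (ht : t < 1) {x : ℝ} (hx : x ∈ Ioo (0 : ℝ) 1) :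
    deriv (fun s => vbar s x) t = (1/2) * exp (-deriv (deriv (vbar t)) x - 1) := by
  obtain ⟨hx0, hx1⟩ := hx
  have hx1' : 0 < 1 - x := sub_pos.mpr hx1
  have ht' : 0 < 1 - t := sub_pos.mpr ht
  have hexp : -deriv (deriv (vbar t)) x - 1 = log (x * (1 - x) / (1 - t)) := by
    rw [deriv_deriv_vbar t hx0.ne' hx1.ne, log_div (by positivity) ht'.ne',
      log_mul hx0.ne' hx1'.ne']
    ring
  rw [(hasDerivAt_vbar_time ht x).deriv, hexp, exp_log (by positivity)]
  field_simp

lemma tendsto_vbar_atTop {x : ℝ} (hx : x ∈ Ioo (0 : ℝ) 1) :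
    Tendsto (fun t => vbar t x) (𝓝[<] 1) atTop := by
  have hc : 0 < (1/2) * (x * (1 - x)) := by
    have := sub_pos.mpr hx.2
    nlinarith [hx.1]
  have hgap : Tendsto (fun t : ℝ => 1 - t) (𝓝[<] 1) (𝓝[>] 0) :=
    tendsto_nhdsWithin_of_tendsto_nhds_of_eventually_within _
      ((continuous_sub_left 1).tendsto' 1 0 (sub_self 1) |>.mono_left nhdsWithin_le_nhds)
      (eventually_nhdsWithin_of_forall fun t ht => sub_pos.mpr (mem_Iio.mp ht))
  have hlog : Tendsto (fun t => -log (1 - t)) (𝓝[<] 1) atTop :=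
    tendsto_neg_atBot_atTop.comp (tendsto_log_nhdsGT_zero.comp hgap)
  refine (tendsto_atTop_add_const_left _
    (-((1/2) * (x ^ 2 * log x + (1 - x) ^ 2 * log (1 - x)) + x * (1 - x)))
    (hlog.const_mul_atTop hc)).congr fun t => ?_
  simp only [vbar]
  ring

theorem stmt_7 (v : ℝ → ℝ → ℝ)
    (hv : ∀ t x, v t x = -((1/4) * x ^ 2 * Real.log (x ^ 2)
        + (1/4) * (1 - x) ^ 2 * Real.log ((1 - x) ^ 2) + x * (1 - x))
        - (1/2) * Real.log (1 - t) * (x * (1 - x))) :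
    (∀ t ∈ Set.Ico (0:ℝ) 1, ∀ x ∈ Set.Ioo (0:ℝ) 1,
      deriv (fun s => v s x) t
        = (1/2) * Real.exp (-(deriv (deriv (v t)) x) - 1)) ∧
    (∀ t ∈ Set.Ico (0:ℝ) 1, v t 0 = 0 ∧ v t 1 = 0) ∧
    (∀ x ∈ Set.Ioo (0:ℝ) 1,
      Filter.Tendsto (fun t => v t x) (nhdsWithin 1 (Set.Iio (1:ℝ))) Filter.atTop) := by
  obtain rfl : v = vbar := by
    ext t x
    rw [hv, vbar, log_pow, log_pow]
    push_cast
    ring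
  exact ⟨fun t ht x hx => deriv_vbar_time_eq_half_exp ht.2 hx,
    fun t _ => ⟨by simp [vbar], by simp [vbar]⟩, fun x hx => tendsto_vbar_atTop hx⟩
end

section
/- Let M be the scaled neutral Wright–Fisher diffusion dM_s = √(M_s(1−M_s)/(1−s)) dB_s on [t,1) with M_t = x ∈ [0,1]. Then the process Σ_s := M_s(1−M_s)/(1−s) is a martingale on [t,1); in particular E[Σ_u] = x(1−x)/(1−t) for all u ∈ [t,1). -/
/-!
With `G_s = M_s(1 - M_s)` and `f(y) = y(1 - y)`, so that `f'' = -2`, the martingale problem says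
that `G_b + ∫_u^b G_r/(1 - r) dr` has conditional expectation `G_u` given `ℱ_u`. Integrating over
`A ∈ ℱ_u` and using Fubini, `h(b) = ∫_A G_b` solves `h(b) = h(u) - ∫_u^b h(r)/(1 - r) dr`, i.e.
`h' = -h/(1 - b)`, so `h(b)/(1 - b)` is constant. This is the martingale property of `G_s/(1 - s)`;
the expectation follows by conditioning on `ℱ_t`, where `M_t = x`.
-/

open MeasureTheory Set Function

theorem div_one_sub_eq_of_eq_sub_integral {h : ℝ → ℝ} (hh : Continuous h) {u v : ℝ}
    (huv : u ≤ v) (hv : v < 1) (heq : ∀ b ∈ Icc u v, h b = h u - ∫ r in u..b, h r / (1 - r)) :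
    h v / (1 - v) = h u / (1 - u) := by
  -- `ψ = h / (1 - ·)` on `[u, v]` by `heq`; unlike `h`, it is differentiable by the FTC.
  set ψ : ℝ → ℝ := fun b => (h u - ∫ r in u..b, h r / (1 - r)) / (1 - b)
  have hcont : ∀ b < 1, ContinuousAt (fun r => h r / (1 - r)) b := fun b hb =>
    hh.continuousAt.div (continuous_const.sub continuous_id).continuousAt (sub_ne_zero.2 hb.ne')
  have hψ : ∀ b ∈ Icc u v, HasDerivAt ψ 0 b := by
    intro b hb
    have hb1 : b < 1 := hb.2.trans_lt hv
    have hprim : HasDerivAt (fun b => ∫ r in u..b, h r / (1 - r)) (h b / (1 - b)) b :=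
      intervalIntegral.integral_hasDerivAt_right
        (ContinuousOn.intervalIntegrable fun r hr =>
          (hcont r ((uIcc_of_le hb.1 ▸ hr).2.trans_lt hb1)).continuousWithinAt)
        (ContinuousAt.stronglyMeasurableAtFilter isOpen_Iio hcont b hb1)
        (hcont b hb1)
    refine ((hprim.const_sub (h u)).div ((hasDerivAt_id b).const_sub 1)
      (sub_ne_zero.2 hb1.ne')).congr_deriv ?_
    simp only [id, ← heq b hb]
    field_simp [sub_ne_zero.2 hb1.ne']
    ring
  have hconst := constant_of_has_deriv_right_zero (f := ψ)
    (fun b hb => (hψ b hb).continuousAt.continuousWithinAt)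
    (fun b hb => (hψ b (Ico_subset_Icc_self hb)).hasDerivWithinAt) v ⟨huv, le_rfl⟩
  simpa [ψ, ← heq v ⟨huv, le_rfl⟩] using hconst

section IntervalIntegralProd

variable {Ω : Type*} [MeasurableSpace Ω] {μ : Measure Ω} [IsFiniteMeasure μ] {F : ℝ → Ω → ℝ}
  {a b C : ℝ}

theorem integrable_uncurry_of_norm_le (hF : Measurable (uncurry F))
    (hC : ∀ r ∈ uIoc a b, ∀ ω, ‖F r ω‖ ≤ C) :
    Integrable (uncurry F) ((volume.restrict (uIoc a b)).prod μ) := by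
  have : IsFiniteMeasure (volume.restrict (uIoc a b)) := by
    rw [uIoc]; infer_instance
  refine .of_bound hF.aestronglyMeasurable C ?_
  filter_upwards [Measure.quasiMeasurePreserving_fst.ae (ae_restrict_mem measurableSet_uIoc)]
    with p hp using hC p.1 hp p.2

theorem integrable_intervalIntegral_of_norm_le (hF : Measurable (uncurry F))
    (hC : ∀ r ∈ uIoc a b, ∀ ω, ‖F r ω‖ ≤ C) :
    Integrable (fun ω => ∫ r in a..b, F r ω) μ := by
  simp_rw [intervalIntegral.intervalIntegral_eq_integral_uIoc]
  exact (integrable_uncurry_of_norm_le (μ := μ) hF hC).integral_prod_right.smul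
    (if a ≤ b then (1 : ℝ) else -1)

end IntervalIntegralProd

section

variable {Ω : Type*} {m0 : MeasurableSpace Ω} {ℱ : Filtration ℝ m0} {P : Measure Ω}
  [IsFiniteMeasure P] {G : ℝ → Ω → ℝ} {C u v : ℝ}

theorem setIntegral_eq_sub_integral_of_condExp_add_eq (hG : Adapted ℱ G)
    (hcont : ∀ ω, Continuous fun s => G s ω) (hC : ∀ s ω, ‖G s ω‖ ≤ C) {b : ℝ} (hub : u ≤ b)
    (hb : b < 1)
    (hcond : P[fun ω => G b ω + ∫ r in u..b, G r ω / (1 - r) | ℱ u] =ᵐ[P] G u)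
    {A : Set Ω} (hA : MeasurableSet[ℱ u] A) :
    ∫ ω in A, G b ω ∂P = ∫ ω in A, G u ω ∂P - ∫ r in u..b, (∫ ω in A, G r ω ∂P) / (1 - r) := by
  have hGm : ∀ s, Measurable (G s) := fun _ => hG.measurable
  have hF : Measurable (uncurry fun r ω => G r ω / (1 - r)) :=
    (measurable_uncurry_of_continuous_of_measurable hcont hGm).div
      (measurable_const.sub measurable_fst)
  have hFC : ∀ r ∈ uIoc u b, ∀ ω, ‖G r ω / (1 - r)‖ ≤ C / (1 - b) := by
    intro r hr ω
    rw [uIoc_of_le hub] at hr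
    rw [norm_div, Real.norm_of_nonneg (show 0 ≤ 1 - r by linarith [hr.2])]
    exact div_le_div₀ ((norm_nonneg _).trans (hC r ω)) (hC r ω) (by linarith)
      (by linarith [hr.2])
  have hGint : Integrable (G b) P :=
    .of_bound (hGm b).aestronglyMeasurable C (.of_forall (hC b))
  have hIint := integrable_intervalIntegral_of_norm_le (μ := P) hF hFC
  have hswap : ∫ ω in A, (∫ r in u..b, G r ω / (1 - r)) ∂P
      = ∫ r in u..b, (∫ ω in A, G r ω ∂P) / (1 - r) := by
    rw [← intervalIntegral_integral_swap (integrable_uncurry_of_norm_le hF hFC)]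
    simp only [integral_div]
  have hsum : Integrable (fun ω => G b ω + ∫ r in u..b, G r ω / (1 - r)) P := hGint.add hIint
  have key := setIntegral_condExp (ℱ.le u) hsum hA
  rw [setIntegral_congr_ae (ℱ.le u A hA) (hcond.mono fun ω hω _ => hω),
    integral_add hGint.integrableOn hIint.integrableOn, hswap] at key
  linarith

theorem condExp_div_one_sub_eq_of_condExp_add_eq (hG : Adapted ℱ G)
    (hcont : ∀ ω, Continuous fun s => G s ω) (hC : ∀ s ω, ‖G s ω‖ ≤ C) (huv : u ≤ v)
    (hv : v < 1)
    (hcond : ∀ b ∈ Icc u v, P[fun ω => G b ω + ∫ r in u..b, G r ω / (1 - r) | ℱ u] =ᵐ[P] G u) :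
    P[fun ω => G v ω / (1 - v) | ℱ u] =ᵐ[P] fun ω => G u ω / (1 - u) := by
  have hdiv_int : ∀ s, Integrable (fun ω => G s ω / (1 - s)) P := fun s =>
    (Integrable.of_bound hG.measurable.aestronglyMeasurable C (.of_forall (hC s))).div_const _
  refine (ae_eq_condExp_of_forall_setIntegral_eq (ℱ.le u) (hdiv_int v)
    (fun _ _ _ => (hdiv_int u).integrableOn) (fun A hA _ => ?_)
    ((hG u).div_const _).aestronglyMeasurable).symm
  have hcont_set : Continuous fun s => ∫ ω in A, G s ω ∂P :=
    continuous_of_dominated (fun _ => hG.measurable.aestronglyMeasurable)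
      (fun s => .of_forall (hC s)) (integrable_const C) (.of_forall hcont)
  rw [integral_div, integral_div]
  exact (div_one_sub_eq_of_eq_sub_integral hcont_set huv hv fun b hb =>
    setIntegral_eq_sub_integral_of_condExp_add_eq hG hcont hC hb.1 (hb.2.trans_lt hv)
      (hcond b hb) hA).symm

end

theorem deriv_mul_one_sub : deriv (fun y : ℝ => y * (1 - y)) = fun y => 1 - 2 * y :=
  funext fun y => ((hasDerivAt_id' y).mul ((hasDerivAt_id' y).const_sub 1)).deriv.trans (by ring)

theorem deriv_deriv_mul_one_sub (y : ℝ) : deriv (deriv fun y : ℝ => y * (1 - y)) y = -2 := by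
  rw [deriv_mul_one_sub]
  exact ((hasDerivAt_id' y).const_mul 2 |>.const_sub 1).deriv.trans (by ring)

theorem norm_mul_one_sub_le_one {y : ℝ} (hy : y ∈ Icc (0 : ℝ) 1) : ‖y * (1 - y)‖ ≤ 1 := by
  rw [Real.norm_eq_abs, abs_le]
  constructor <;> nlinarith [hy.1, hy.2]

theorem stmt_10_general {Ω : Type*} {m0 : MeasurableSpace Ω} (ℱ : Filtration ℝ m0)
    (P : Measure Ω) [IsProbabilityMeasure P] (M : ℝ → Ω → ℝ) (t x : ℝ)
    (hMt : ∀ ω, M t ω = x)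
    (hrange : ∀ s ω, M s ω ∈ Set.Icc (0:ℝ) 1)
    (hadapted : Adapted ℱ M)
    (hcont : ∀ ω, Continuous fun s => M s ω)
    (hMP : ∀ f : ℝ → ℝ, ContDiff ℝ 2 f → ∀ u v, t ≤ u → u ≤ v → v < 1 →
      P[(fun ω => f (M v ω)
          - (1/2) * ∫ r in u..v, (M r ω * (1 - M r ω) / (1 - r)) * deriv (deriv f) (M r ω))
        | ℱ u] =ᵐ[P] fun ω => f (M u ω)) :
    (∀ u v, t ≤ u → u ≤ v → v < 1 →
      P[(fun ω => M v ω * (1 - M v ω) / (1 - v)) | ℱ u]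
        =ᵐ[P] fun ω => M u ω * (1 - M u ω) / (1 - u)) ∧
    (∀ u, t ≤ u → u < 1 →
      ∫ ω, M u ω * (1 - M u ω) / (1 - u) ∂P = x * (1 - x) / (1 - t)) := by
  have hcond : ∀ u b, t ≤ u → u ≤ b → b < 1 →
      P[fun ω => M b ω * (1 - M b ω) + ∫ r in u..b, M r ω * (1 - M r ω) / (1 - r) | ℱ u]
        =ᵐ[P] fun ω => M u ω * (1 - M u ω) := by
    intro u b hu hub hb
    convert hMP (fun y => y * (1 - y)) (by fun_prop) u b hu hub hb using 3 with ω
    simp only [deriv_deriv_mul_one_sub, intervalIntegral.integral_mul_const]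
    ring
  have hmart : ∀ u v, t ≤ u → u ≤ v → v < 1 →
      P[(fun ω => M v ω * (1 - M v ω) / (1 - v)) | ℱ u]
        =ᵐ[P] fun ω => M u ω * (1 - M u ω) / (1 - u) := fun u v hu huv hv =>
    condExp_div_one_sub_eq_of_condExp_add_eq (G := fun s ω => M s ω * (1 - M s ω))
      (fun s => (hadapted s).mul (measurable_const.sub (hadapted s)))
      (fun ω => (hcont ω).mul (continuous_const.sub (hcont ω)))
      (fun s ω => norm_mul_one_sub_le_one (hrange s ω)) huv hv
      fun b hb => hcond u b hu hb.1 (hb.2.trans_lt hv)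
  refine ⟨hmart, fun u hu hu1 => ?_⟩
  rw [← integral_condExp (ℱ.le t), integral_congr_ae (hmart t u le_rfl hu hu1)]
  simp [hMt]

/-- For the scaled neutral Wright–Fisher diffusion `dM_s = √(M_s(1−M_s)/(1−s)) dB_s` on `[t,1)`
with `M_t = x` (encoded through its martingale problem: for every `C²` function `f`, the process
`f(M_s) − (1/2)∫ Σ_u f''(M_u) du` is a martingale, where `Σ_u = M_u(1−M_u)/(1−u)`), the process
`Σ_s = M_s(1−M_s)/(1−s)` is a martingale on `[t,1)`; in particular
`E[Σ_u] = x(1−x)/(1−t)` for `u ∈ [t,1)`. -/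
theorem stmt_10 {Ω : Type*} {m0 : MeasurableSpace Ω} (ℱ : Filtration ℝ m0)
    (P : Measure Ω) [IsProbabilityMeasure P] (M : ℝ → Ω → ℝ) (t x : ℝ)
    (ht : t ∈ Set.Ico (0:ℝ) 1) (hx : x ∈ Set.Icc (0:ℝ) 1)
    (hMt : ∀ ω, M t ω = x)
    (hrange : ∀ s ω, M s ω ∈ Set.Icc (0:ℝ) 1)
    (hadapted : Adapted ℱ M)
    (hcont : ∀ ω, Continuous fun s => M s ω)
    (hMP : ∀ f : ℝ → ℝ, ContDiff ℝ 2 f → ∀ u v, t ≤ u → u ≤ v → v < 1 →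
      P[(fun ω => f (M v ω)
          - (1/2) * ∫ r in u..v, (M r ω * (1 - M r ω) / (1 - r)) * deriv (deriv f) (M r ω))
        | ℱ u] =ᵐ[P] fun ω => f (M u ω)) :
    (∀ u v, t ≤ u → u ≤ v → v < 1 →
      P[(fun ω => M v ω * (1 - M v ω) / (1 - v)) | ℱ u]
        =ᵐ[P] fun ω => M u ω * (1 - M u ω) / (1 - u)) ∧
    (∀ u, t ≤ u → u < 1 →
      ∫ ω, M u ω * (1 - M u ω) / (1 - u) ∂P = x * (1 - x) / (1 - t)) :=
  stmt_10_general ℱ P M t x hMt hrange hadapted hcont hMP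
end
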